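/- Let R be a solvable complex Leibniz algebra with nilradical N. If every nil-independent family of derivations of N has at most m elements, then dim R ≤ dim N + m. -/

import Mathlib

open Finset Module

/-- The Leibniz identity for a bilinear bracket `b`. -/
def IsLeibniz {L : Type*} [AddCommGroup L] [Module ℂ L]
    (b : L →ₗ[ℂ] L →ₗ[ℂ] L) : Prop :=
  ∀ x y z, b x (b y z) = b (b x y) z - b (b x z) y

/-- The submodule spanned by all brackets `[S, T]`. -/
def bracketSpan {L : Type*} [AddCommGroup L] [Module ℂ L]
    (b : L →ₗ[ℂ] L →ₗ[ℂ] L) (S T : Submodule ℂ L) : Submodule ℂ L :=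
  Submodule.span ℂ {z | ∃ x ∈ S, ∃ y ∈ T, z = b x y}

/-- The lower central series: `lcs b k` is `L^{k+1}`, i.e. `lcs b 0 = L¹ = L`. -/
def lcs {L : Type*} [AddCommGroup L] [Module ℂ L]
    (b : L →ₗ[ℂ] L →ₗ[ℂ] L) : ℕ → Submodule ℂ L
  | 0 => ⊤
  | k+1 => bracketSpan b (lcs b k) ⊤

/-- The derived series: `derSeries b s` is `L^{[s+1]}`. -/
def derSeries {L : Type*} [AddCommGroup L] [Module ℂ L]
    (b : L →ₗ[ℂ] L →ₗ[ℂ] L) : ℕ → Submodule ℂ L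
  | 0 => ⊤
  | s+1 => bracketSpan b (derSeries b s) (derSeries b s)

/-- The algebra `(L, b)` is nilpotent. -/
def IsNilpotentAlg {L : Type*} [AddCommGroup L] [Module ℂ L]
    (b : L →ₗ[ℂ] L →ₗ[ℂ] L) : Prop :=
  ∃ k, lcs b k = ⊥

/-- The algebra `(L, b)` is solvable. -/
def IsSolvableAlg {L : Type*} [AddCommGroup L] [Module ℂ L]
    (b : L →ₗ[ℂ] L →ₗ[ℂ] L) : Prop :=
  ∃ s, derSeries b s = ⊥

/-- `I` is a two-sided ideal of `(L, b)`. -/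
def IsIdeal {L : Type*} [AddCommGroup L] [Module ℂ L]
    (b : L →ₗ[ℂ] L →ₗ[ℂ] L) (I : Submodule ℂ L) : Prop :=
  ∀ a ∈ I, ∀ y : L, b a y ∈ I ∧ b y a ∈ I

/-- Lower central series of the ideal `I` computed inside `L`:
`idealLCS b I k` is `I^{k+1}`. -/
def idealLCS {L : Type*} [AddCommGroup L] [Module ℂ L]
    (b : L →ₗ[ℂ] L →ₗ[ℂ] L) (I : Submodule ℂ L) : ℕ → Submodule ℂ L
  | 0 => I
  | k+1 => bracketSpan b (idealLCS b I k) I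

/-- `I` is a nilpotent two-sided ideal of `(L, b)`. -/
def IsNilpotentIdeal {L : Type*} [AddCommGroup L] [Module ℂ L]
    (b : L →ₗ[ℂ] L →ₗ[ℂ] L) (I : Submodule ℂ L) : Prop :=
  IsIdeal b I ∧ ∃ k, idealLCS b I k = ⊥

/-- `I` is the nilradical (the maximal nilpotent ideal) of `(L, b)`. -/
def IsNilradical {L : Type*} [AddCommGroup L] [Module ℂ L]
    (b : L →ₗ[ℂ] L →ₗ[ℂ] L) (I : Submodule ℂ L) : Prop :=
  IsNilpotentIdeal b I ∧ ∀ J : Submodule ℂ L, IsNilpotentIdeal b J → J ≤ I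

/-- Isomorphism of bracket algebras. -/
def LeibnizIso {L M : Type*} [AddCommGroup L] [Module ℂ L] [AddCommGroup M] [Module ℂ M]
    (bL : L →ₗ[ℂ] L →ₗ[ℂ] L) (bM : M →ₗ[ℂ] M →ₗ[ℂ] M) : Prop :=
  ∃ e : L ≃ₗ[ℂ] M, ∀ x y : L, e (bL x y) = bM (e x) (e y)

/-- The nilradical of `(L, bL)` is isomorphic (as an algebra) to `(M, bM)`. -/
def NilradicalIso {L M : Type*} [AddCommGroup L] [Module ℂ L] [AddCommGroup M] [Module ℂ M]
    (bL : L →ₗ[ℂ] L →ₗ[ℂ] L) (bM : M →ₗ[ℂ] M →ₗ[ℂ] M) : Prop :=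
  ∃ I : Submodule ℂ L, IsNilradical bL I ∧
    ∃ f : M →ₗ[ℂ] L, Function.Injective f ∧ LinearMap.range f = I ∧
      ∀ x y : M, f (bM x y) = bL (f x) (f y)

/-- A derivation of the algebra `(L, b)`. -/
def IsDerivation {L : Type*} [AddCommGroup L] [Module ℂ L]
    (b : L →ₗ[ℂ] L →ₗ[ℂ] L) (d : L →ₗ[ℂ] L) : Prop :=
  ∀ x y : L, d (b x y) = b (d x) y + b x (d y)

/-- The bilinear bracket on `Fin n → ℂ` determined by structure constants `c`. -/
noncomputable def bilin (n : ℕ) (c : Fin n → Fin n → Fin n → ℂ) :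
    (Fin n → ℂ) →ₗ[ℂ] (Fin n → ℂ) →ₗ[ℂ] (Fin n → ℂ) :=
  LinearMap.mk₂ ℂ (fun x y k => ∑ i, ∑ j, x i * y j * c i j k)
    (by intro x x' y; funext k; simp [add_mul, Finset.sum_add_distrib])
    (by intro a x y; funext k; simp [Finset.mul_sum, mul_assoc])
    (by intro x y y'; funext k; simp [mul_add, add_mul, Finset.sum_add_distrib])
    (by intro a x y; funext k; simp [Finset.mul_sum, mul_assoc, mul_left_comm])

/-- The paper's basis vector `e_i` (1-indexed: valid for `1 ≤ i ≤ n`). -/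
noncomputable def E (n : ℕ) (i : ℕ) : Fin n → ℂ :=
  if h : 1 ≤ i ∧ i ≤ n then Pi.single (⟨i - 1, by omega⟩ : Fin n) 1 else 0

/-- Structure constants of the null-filiform algebra `NF_n`:
`[e_i, e_1] = e_{i+1}` for `1 ≤ i ≤ n-1` (indices are 0-based). -/
noncomputable def cNF (n : ℕ) : Fin n → Fin n → Fin n → ℂ := fun i j k =>
  if j.val = 0 ∧ k.val = i.val + 1 then 1 else 0

/-- Structure constants of `F_n^1`: `[e_1,e_1] = e_3`, `[e_i,e_1] = e_{i+1}` for `2 ≤ i ≤ n-1`. -/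
noncomputable def cF1 (n : ℕ) : Fin n → Fin n → Fin n → ℂ := fun i j k =>
  if j.val = 0 ∧ ((i.val = 0 ∧ k.val = 2) ∨ (1 ≤ i.val ∧ k.val = i.val + 1)) then 1 else 0

/-- Structure constants of `F_n^2`: `[e_1,e_1] = e_3`, `[e_i,e_1] = e_{i+1}` for `3 ≤ i ≤ n-1`. -/
noncomputable def cF2 (n : ℕ) : Fin n → Fin n → Fin n → ℂ := fun i j k =>
  if j.val = 0 ∧ ((i.val = 0 ∧ k.val = 2) ∨ (2 ≤ i.val ∧ k.val = i.val + 1)) then 1 else 0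

/-- Structure constants of the filiform Lie algebra `n_{n,1}`:
`[e_i,e_1] = -[e_1,e_i] = e_{i+1}` for `2 ≤ i ≤ n-1`. -/
noncomputable def cNn (n : ℕ) : Fin n → Fin n → Fin n → ℂ := fun i j k =>
  (if j.val = 0 ∧ 1 ≤ i.val ∧ k.val = i.val + 1 then 1 else 0)
  - (if i.val = 0 ∧ 1 ≤ j.val ∧ k.val = j.val + 1 then 1 else 0)

/-- Structure constants of the filiform Lie algebra `Q_{2n}` (on `Fin (2*n)`). -/
noncomputable def cQ (n : ℕ) : Fin (2*n) → Fin (2*n) → Fin (2*n) → ℂ := fun i j k =>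
  (if j.val = 0 ∧ 1 ≤ i.val ∧ i.val ≤ 2*n - 3 ∧ k.val = i.val + 1 then 1 else 0)
  - (if i.val = 0 ∧ 1 ≤ j.val ∧ j.val ≤ 2*n - 3 ∧ k.val = j.val + 1 then 1 else 0)
  + (if 1 ≤ i.val ∧ i.val ≤ n - 1 ∧ i.val + j.val = 2*n - 1 ∧ k.val = 2*n - 1
      then (-1 : ℂ)^(i.val + 1) else 0)
  - (if 1 ≤ j.val ∧ j.val ≤ n - 1 ∧ i.val + j.val = 2*n - 1 ∧ k.val = 2*n - 1
      then (-1 : ℂ)^(j.val + 1) else 0)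

/-- Structure constants of `R_{n+1,1}(γ₁,γ₂,γ₃)` (basis `e_1,…,e_n,x`; `x` has 0-based index `n`). -/
noncomputable def cRn (n : ℕ) (g1 g2 g3 : ℂ) : Fin (n+1) → Fin (n+1) → Fin (n+1) → ℂ := fun i j k =>
  (if j.val = 0 ∧ 1 ≤ i.val ∧ i.val ≤ n - 2 ∧ k.val = i.val + 1 then 1 else 0)
  - (if i.val = 0 ∧ 1 ≤ j.val ∧ j.val ≤ n - 2 ∧ k.val = j.val + 1 then 1 else 0)
  + (if i.val = 0 ∧ j.val = n ∧ k.val = 0 then 1 else 0)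
  - (if i.val = n ∧ j.val = 0 ∧ k.val = 0 then 1 else 0)
  + (if i.val = n ∧ j.val = 0 ∧ k.val = n - 1 then g1 else 0)
  + (if 1 ≤ i.val ∧ i.val ≤ n - 2 ∧ j.val = n ∧ k.val = i.val then ((i.val : ℂ) + 1 - n) else 0)
  + (if i.val = n ∧ 1 ≤ j.val ∧ j.val ≤ n - 2 ∧ k.val = j.val then ((n : ℂ) - j.val - 1) else 0)
  + (if i.val = n ∧ j.val = 1 ∧ k.val = n - 1 then g2 else 0)
  + (if i.val = n ∧ j.val = n ∧ k.val = n - 1 then g3 else 0)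

/-- Structure constants of `R_{2n+1,1}(γ₁,γ₂,γ₃)` (basis `e_1,…,e_{2n},x`; `x` has 0-based index `2n`). -/
noncomputable def cRQ (n : ℕ) (g1 g2 g3 : ℂ) : Fin (2*n+1) → Fin (2*n+1) → Fin (2*n+1) → ℂ := fun i j k =>
  (if j.val = 0 ∧ 1 ≤ i.val ∧ i.val ≤ 2*n - 3 ∧ k.val = i.val + 1 then 1 else 0)
  - (if i.val = 0 ∧ 1 ≤ j.val ∧ j.val ≤ 2*n - 3 ∧ k.val = j.val + 1 then 1 else 0)
  + (if 1 ≤ i.val ∧ i.val ≤ n - 1 ∧ i.val + j.val = 2*n - 1 ∧ k.val = 2*n - 1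
      then (-1 : ℂ)^(i.val + 1) else 0)
  - (if 1 ≤ j.val ∧ j.val ≤ n - 1 ∧ i.val + j.val = 2*n - 1 ∧ k.val = 2*n - 1
      then (-1 : ℂ)^(j.val + 1) else 0)
  + (if i.val = 0 ∧ j.val = 2*n ∧ k.val = 0 then 1 else 0)
  - (if i.val = 2*n ∧ j.val = 0 ∧ k.val = 0 then 1 else 0)
  + (if i.val = 2*n ∧ j.val = 0 ∧ k.val = n - 1 then g1 else 0)
  + (if 1 ≤ i.val ∧ i.val ≤ 2*n - 2 ∧ j.val = 2*n ∧ k.val = i.val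
      then ((2*n : ℂ) + 2*((i.val : ℂ) + 1) - 7)/2 else 0)
  - (if i.val = 2*n ∧ 1 ≤ j.val ∧ j.val ≤ 2*n - 2 ∧ k.val = j.val
      then ((2*n : ℂ) + 2*((j.val : ℂ) + 1) - 7)/2 else 0)
  + (if i.val = 2*n ∧ j.val = 1 ∧ k.val = n - 1 then g2 else 0)
  + (if i.val = 2*n ∧ j.val = 2*n ∧ k.val = n - 1 then g3 else 0)



/-!
The right multiplications `R_x = b · x` of a Leibniz algebra form a Lie algebra of endomorphisms,
`⁅R_x, R_y⁆ = R_{[y,x]}`, which is solvable when `L` is. By Lie's theorem and Engel's theorem its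
derived algebra acts nilpotently on `L`; since it contains `R_w` for every `w ∈ [L, L]`, the
derived ideal `[L, L]` is nilpotent and hence lies in `N`.

Lift a basis of `L ⧸ N` to `x_1, …, x_q ∈ L`. The restrictions of the `R_{x_i}` to `N` are
derivations of `N`. If `∑ α_i R_{x_i}` were nilpotent on `N`, then with `x = ∑ α_i x_i` the
Lie algebra `ℂ R_x ⊕ R_N` would act nilpotently on `L` (Engel's criterion for an ideal `R_N`
acting nilpotently plus one nilpotent element), so `N + ℂ x` would be a nilpotent ideal, forcing
`x ∈ N` and `α = 0`. The family is therefore nil-independent and `dim L - dim N = q ≤ m`.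
-/

theorem LieSubmodule.toSubmodule_lie_le {R L M : Type*} [CommRing R] [LieRing L]
    [LieAlgebra R L] [AddCommGroup M] [Module R M] [LieRingModule L M] [LieModule R L M]
    {I : LieIdeal R L} {N : LieSubmodule R L M} {p : Submodule R M}
    (h : ∀ x ∈ I, ∀ m ∈ N, ⁅x, m⁆ ∈ p) : (⁅I, N⁆ : LieSubmodule R L M).toSubmodule ≤ p := by
  rw [LieSubmodule.lieIdeal_oper_eq_linear_span', Submodule.span_le]
  rintro _ ⟨x, hx, m, hm, rfl⟩
  exact h x hx m hm

open LieAlgebra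

namespace LieModule

section Weight

variable {R L M : Type*} [CommRing R] [LieRing L] [LieAlgebra R L]
  [AddCommGroup M] [Module R M] [LieRingModule L M] [LieModule R L M]

theorem lie_eq_zero_of_mem_derivedSeries_of_mem_weightSpace {χ : L → R} {v : M}
    (hv : v ∈ weightSpace M χ) {x : L} (hx : x ∈ derivedSeries R L 1) : ⁅x, v⁆ = 0 := by
  rw [mem_weightSpace] at hv
  rw [derivedSeries_def, derivedSeriesOfIdeal_succ, derivedSeriesOfIdeal_zero] at hx
  refine LieSubmodule.toSubmodule_lie_le
    (p := LinearMap.ker ((toEnd R L M : L →ₗ[R] Module.End R M).flip v)) ?_ hx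
  intro y _ z _
  simp [hv, smul_smul, mul_comm]

end Weight

variable {K L M : Type*} [Field K] [IsAlgClosed K] [CharZero K] [LieRing L] [LieAlgebra K L]
  [IsSolvable L] [AddCommGroup M] [Module K M] [LieRingModule L M] [LieModule K L M]
  [FiniteDimensional K M]

/-- Induction on `dim M`: the line spanned by a common eigenvector (Lie's theorem) is killed by
`⁅L, L⁆`, and `⁅L, L⁆` acts nilpotently on the quotient by that line. -/
theorem isNilpotent_toEnd_of_mem_derivedSeries {x : L} (hx : x ∈ derivedSeries K L 1) :
    _root_.IsNilpotent (toEnd K L M x) := by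
  induction h : Module.finrank K M using Nat.strong_induction_on generalizing M with
  | _ n ih =>
  rcases subsingleton_or_nontrivial M with hM | hM
  · exact ⟨1, LinearMap.ext fun _ => Subsingleton.elim _ _⟩
  obtain ⟨χ, hχ⟩ := exists_nontrivial_weightSpace_of_isSolvable K L M
  obtain ⟨⟨v, hv⟩, hv0⟩ := exists_ne (0 : weightSpace M χ)
  let line : LieSubmodule K L M :=
    { K ∙ v with
      lie_mem := by
        intro y m hm
        obtain ⟨t, rfl⟩ := Submodule.mem_span_singleton.mp hm
        rw [lie_smul, (mem_weightSpace _ _).mp hv y, smul_smul]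
        exact Submodule.smul_mem _ _ (Submodule.mem_span_singleton_self v) }
  have hlt : Module.finrank K (M ⧸ line) < n := by
    have hdim := Submodule.finrank_quotient_add_finrank (K ∙ v)
    rw [finrank_span_singleton fun h => hv0 (Subtype.ext h)] at hdim
    change Module.finrank K (M ⧸ (K ∙ v)) < n
    omega
  obtain ⟨k, hk⟩ := ih _ hlt (M := M ⧸ line) rfl
  refine ⟨k + 1, LinearMap.ext fun m => ?_⟩
  have hmem : (toEnd K L M x ^ k) m ∈ line := by
    rw [← LieSubmodule.Quotient.mk_eq_zero', ← LieSubmodule.Quotient.mk'_apply,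
      ← toEnd_pow_apply_map, hk]
    rfl
  obtain ⟨t, ht⟩ := Submodule.mem_span_singleton.mp hmem
  rw [pow_succ', Module.End.mul_apply, ← ht, map_smul, toEnd_apply_apply,
    lie_eq_zero_of_mem_derivedSeries_of_mem_weightSpace hv hx, smul_zero, LinearMap.zero_apply]

instance isNilpotent_derivedSeries_one : IsNilpotent (derivedSeries K L 1) M :=
  isNilpotent_iff_forall'.mpr fun x => isNilpotent_toEnd_of_mem_derivedSeries (L := L) x.2

end LieModule

section Bracket

variable {L : Type*} [AddCommGroup L] [Module ℂ L] (b : L →ₗ[ℂ] L →ₗ[ℂ] L)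

theorem mem_bracketSpan {S T : Submodule ℂ L} {x y : L} (hx : x ∈ S) (hy : y ∈ T) :
    b x y ∈ bracketSpan b S T :=
  Submodule.subset_span ⟨x, hx, y, hy, rfl⟩

theorem bracketSpan_le {S T U : Submodule ℂ L} (h : ∀ x ∈ S, ∀ y ∈ T, b x y ∈ U) :
    bracketSpan b S T ≤ U :=
  Submodule.span_le.mpr fun _ ⟨x, hx, y, hy, hz⟩ => hz ▸ h x hx y hy

end Bracket

attribute [local instance] LieRing.ofAssociativeRing

section RightMul

variable {L : Type*} [AddCommGroup L] [Module ℂ L] {b : L →ₗ[ℂ] L →ₗ[ℂ] L} {N : Submodule ℂ L}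

theorem IsLeibniz.lie_flip (hb : IsLeibniz b) (x y : L) :
    ⁅b.flip x, b.flip y⁆ = b.flip (b y x) := by
  ext w
  simp [LieRing.of_associative_ring_bracket, hb w y x]

variable (b) in
def rightMulSubalgebra (hb : IsLeibniz b) (J : Submodule ℂ L)
    (hJ : ∀ x ∈ J, ∀ y ∈ J, b x y ∈ J) : LieSubalgebra ℂ (Module.End ℂ L) :=
  { J.map b.flip with
    lie_mem' := by
      rintro _ _ ⟨x, hx, rfl⟩ ⟨y, hy, rfl⟩
      exact ⟨b y x, hJ y hy x hx, (hb.lie_flip x y).symm⟩ }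

variable (b) in
abbrev rightMulAlgebra (hb : IsLeibniz b) : LieSubalgebra ℂ (Module.End ℂ L) :=
  rightMulSubalgebra b hb ⊤ fun _ _ _ _ => trivial

variable (b) in
def rightMulOn (hN : IsIdeal b N) : L →ₗ[ℂ] Module.End ℂ N where
  toFun x := (b.flip x).restrict fun u hu => by rw [LinearMap.flip_apply]; exact (hN u hu x).1
  map_add' _ _ := by ext; simp [LinearMap.coe_restrict_apply]
  map_smul' _ _ := by ext; simp [LinearMap.coe_restrict_apply]

theorem IsLeibniz.isDerivation_rightMulOn (hb : IsLeibniz b) (hN : IsIdeal b N)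
    {bN : N →ₗ[ℂ] N →ₗ[ℂ] N} (hbN : ∀ u v : N, (bN u v : L) = b u v) (x : L) :
    IsDerivation bN (rightMulOn b hN x) := by
  intro u v
  apply Subtype.ext
  simp [rightMulOn, LinearMap.coe_restrict_apply, hbN, hb u v x]

theorem isNilpotent_flip_of_isNilpotent_rightMulOn (hN : IsIdeal b N) {x : L}
    (hxN : ∀ u, b u x ∈ N) (hx : IsNilpotent (rightMulOn b hN x)) : IsNilpotent (b.flip x) := by
  obtain ⟨e, he⟩ := hx
  refine ⟨e + 1, LinearMap.ext fun u => ?_⟩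
  have := congrArg Subtype.val (LinearMap.congr_fun he ⟨b u x, hxN u⟩)
  rw [pow_succ, Module.End.mul_apply]
  simp only [rightMulOn, LinearMap.coe_mk, AddHom.coe_mk] at this
  rwa [Module.End.pow_restrict, LinearMap.coe_restrict_apply] at this

end RightMul

section Transfer

open LieModule

variable {L : Type*} [AddCommGroup L] [Module ℂ L] {b : L →ₗ[ℂ] L →ₗ[ℂ] L}
  {T : Type*} [LieRing T] [LieAlgebra ℂ T] [LieRingModule T L] {J : Submodule ℂ L}

theorem idealLCS_le_lowerCentralSeries (hJ : ∀ j ∈ J, ∃ t : T, ∀ u, ⁅t, u⁆ = b u j) (k : ℕ) :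
    idealLCS b J k ≤ lowerCentralSeries ℂ T L k := by
  induction k with
  | zero => exact le_top
  | succ k ih =>
    refine bracketSpan_le b fun u hu j hj => ?_
    obtain ⟨t, ht⟩ := hJ j hj
    rw [← ht, lowerCentralSeries_succ]
    exact LieSubmodule.lie_mem_lie (LieSubmodule.mem_top t) (ih hu)

theorem lowerCentralSeries_succ_le_idealLCS [LieModule ℂ T L] (hJid : IsIdeal b J)
    (hT : ∀ t : T, ∃ j ∈ J, ∀ u, ⁅t, u⁆ = b u j) (k : ℕ) :
    lowerCentralSeries ℂ T L (k + 1) ≤ idealLCS b J k := by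
  rw [lowerCentralSeries_succ]
  refine LieSubmodule.toSubmodule_lie_le fun t _ u hu => ?_
  obtain ⟨j, hj, ht⟩ := hT t
  rw [ht]
  cases k with
  | zero => exact (hJid j hj u).2
  | succ k => exact mem_bracketSpan b (lowerCentralSeries_succ_le_idealLCS hJid hT k hu) hj

theorem isNilpotentIdeal_of_isNilpotent [LieModule ℂ T L] [IsNilpotent T L] (hJid : IsIdeal b J)
    (hJ : ∀ j ∈ J, ∃ t : T, ∀ u, ⁅t, u⁆ = b u j) : IsNilpotentIdeal b J := by
  obtain ⟨k, hk⟩ := (isNilpotent_iff ℂ T L).mp ‹_›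
  refine ⟨hJid, k, le_bot_iff.mp ?_⟩
  have := idealLCS_le_lowerCentralSeries hJ k
  rwa [hk, LieSubmodule.bot_toSubmodule] at this

theorem isNilpotent_of_isNilpotentIdeal [LieModule ℂ T L] (hJ : IsNilpotentIdeal b J)
    (hT : ∀ t : T, ∃ j ∈ J, ∀ u, ⁅t, u⁆ = b u j) : IsNilpotent T L := by
  obtain ⟨hJid, k, hk⟩ := hJ
  refine (isNilpotent_iff ℂ T L).mpr ⟨k + 1, ?_⟩
  rw [← LieSubmodule.toSubmodule_eq_bot, ← le_bot_iff, ← hk]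
  exact lowerCentralSeries_succ_le_idealLCS hJid hT k

end Transfer

section DerivedIdeal

variable {L : Type*} [AddCommGroup L] [Module ℂ L] {b : L →ₗ[ℂ] L →ₗ[ℂ] L}

theorem mem_map_derSeries_of_mem_derivedSeries (hb : IsLeibniz b) (k : ℕ)
    {A : rightMulAlgebra b hb} (hA : A ∈ derivedSeries ℂ (rightMulAlgebra b hb) k) :
    (A : Module.End ℂ L) ∈ (derSeries b k).map b.flip := by
  induction k generalizing A with
  | zero => exact A.2
  | succ k ih =>
    rw [derivedSeries_def, derivedSeriesOfIdeal_succ, ← derivedSeries_def] at hA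
    refine LieSubmodule.toSubmodule_lie_le (p := ((derSeries b (k + 1)).map b.flip).comap
      (rightMulAlgebra b hb).incl.toLinearMap) (fun B hB C hC => ?_) hA
    obtain ⟨x, hx, hBx⟩ := ih hB
    obtain ⟨y, hy, hCy⟩ := ih hC
    refine ⟨b y x, mem_bracketSpan b hy hx, ?_⟩
    simp only [LieHom.coe_toLinearMap, LieHom.map_lie, LieSubalgebra.coe_incl]
    rw [← hBx, ← hCy, hb.lie_flip]

theorem isSolvable_rightMulAlgebra (hb : IsLeibniz b) (hsolv : IsSolvableAlg b) :
    IsSolvable (rightMulAlgebra b hb) := by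
  obtain ⟨k, hk⟩ := hsolv
  refine IsSolvable.mk (R := ℂ) (k := k) (eq_bot_iff.mpr fun A hA => ?_)
  have := mem_map_derSeries_of_mem_derivedSeries hb k hA
  rw [hk, Submodule.map_bot, Submodule.mem_bot] at this
  exact (LieSubmodule.mem_bot A).mpr (Subtype.ext this)

theorem exists_mem_derivedSeries_one_eq_flip (hb : IsLeibniz b) {w : L}
    (hw : w ∈ derSeries b 1) :
    ∃ A ∈ derivedSeries ℂ (rightMulAlgebra b hb) 1, (A : Module.End ℂ L) = b.flip w := by
  set S := rightMulAlgebra b hb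
  suffices derSeries b 1 ≤
      ((derivedSeries ℂ S 1 : Submodule ℂ S).map S.incl.toLinearMap).comap b.flip by
    obtain ⟨A, hA, hAw⟩ := this hw
    exact ⟨A, hA, hAw⟩
  refine bracketSpan_le b fun x _ y _ =>
    ⟨⁅(⟨b.flip y, y, trivial, rfl⟩ : S), ⟨b.flip x, x, trivial, rfl⟩⁆, ?_, ?_⟩
  · rw [derivedSeries_def, derivedSeriesOfIdeal_succ, derivedSeriesOfIdeal_zero]
    exact LieSubmodule.lie_mem_lie (LieSubmodule.mem_top _) (LieSubmodule.mem_top _)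
  · simp [hb.lie_flip]

theorem derSeries_one_le_of_isNilradical [FiniteDimensional ℂ L] (hb : IsLeibniz b)
    (hsolv : IsSolvableAlg b) {N : Submodule ℂ L} (hN : IsNilradical b N) :
    derSeries b 1 ≤ N := by
  have := isSolvable_rightMulAlgebra hb hsolv
  refine hN.2 _ (isNilpotentIdeal_of_isNilpotent (T := derivedSeries ℂ (rightMulAlgebra b hb) 1)
    (fun _ _ _ => ⟨mem_bracketSpan b trivial trivial, mem_bracketSpan b trivial trivial⟩)
    fun w hw => ?_)
  obtain ⟨A, hA, hAw⟩ := exists_mem_derivedSeries_one_eq_flip hb hw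
  exact ⟨⟨A, hA⟩, fun u => LinearMap.congr_fun hAw u⟩

end DerivedIdeal

section Nilradical

variable {L : Type*} [AddCommGroup L] [Module ℂ L] {b : L →ₗ[ℂ] L →ₗ[ℂ] L} {N : Submodule ℂ L}

theorem isNilpotentIdeal_sup_span_singleton (hb : IsLeibniz b) (hN : IsNilpotentIdeal b N)
    (hLN : ∀ u v, b u v ∈ N) {x : L} (hx : IsNilpotent (rightMulOn b hN.1 x)) :
    IsNilpotentIdeal b (N ⊔ ℂ ∙ x) := by
  have hJ : ∀ y ∈ N ⊔ ℂ ∙ x, ∀ z ∈ N ⊔ ℂ ∙ x, b y z ∈ N ⊔ ℂ ∙ x :=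
    fun y _ z _ => Submodule.mem_sup_left (hLN y z)
  set T := rightMulSubalgebra b hb _ hJ
  let I : LieIdeal ℂ T :=
    { (N.map b.flip).comap T.incl.toLinearMap with
      lie_mem := by
        rintro ⟨_, j, -, rfl⟩ _ ⟨n, hn, hnm⟩
        refine ⟨b n j, (hN.1 n hn j).1, ?_⟩
        rw [← hb.lie_flip j n]
        exact congrArg (⁅b.flip j, ·⁆) hnm }
  let X : T := ⟨b.flip x, x, Submodule.mem_sup_right (Submodule.mem_span_singleton_self x), rfl⟩
  have hspan : ℂ ∙ X ⊔ I.toLieSubalgebra.toSubmodule = ⊤ := by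
    refine eq_top_iff.mpr fun t _ => ?_
    obtain ⟨j, hj, hjt⟩ := t.2
    obtain ⟨n, hn, _, hz, rfl⟩ := Submodule.mem_sup.mp hj
    obtain ⟨c, rfl⟩ := Submodule.mem_span_singleton.mp hz
    refine Submodule.mem_sup.mpr ⟨c • X,
      Submodule.smul_mem _ _ (Submodule.mem_span_singleton_self X), t - c • X, ⟨n, hn, ?_⟩,
      add_sub_cancel _ _⟩
    simp [← hjt, X]
  have hX : IsNilpotent (LieModule.toEnd ℂ T L X) :=
    isNilpotent_flip_of_isNilpotent_rightMulOn hN.1 (fun u => hLN u x) hx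
  have hI : LieModule.IsNilpotent I L := by
    refine isNilpotent_of_isNilpotentIdeal hN fun t => ?_
    obtain ⟨n, hn, hnt⟩ := t.2
    exact ⟨n, hn, fun u => (LinearMap.congr_fun hnt u).symm⟩
  have := LieSubmodule.isNilpotentOfIsNilpotentSpanSupEqTop hspan hX hI
  exact isNilpotentIdeal_of_isNilpotent (T := T)
    (fun a _ y => ⟨Submodule.mem_sup_left (hLN a y), Submodule.mem_sup_left (hLN y a)⟩)
    fun j hj => ⟨⟨b.flip j, j, hj, rfl⟩, fun u => rfl⟩

theorem mem_of_isNilpotent_rightMulOn (hb : IsLeibniz b) (hN : IsNilradical b N)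
    (hLN : ∀ u v, b u v ∈ N) {x : L} (hx : IsNilpotent (rightMulOn b hN.1.1 x)) : x ∈ N :=
  hN.2 _ (isNilpotentIdeal_sup_span_singleton hb hN.1 hLN hx)
    (Submodule.mem_sup_right (Submodule.mem_span_singleton_self x))

end Nilradical

theorem statement7 {L : Type*} [AddCommGroup L] [Module ℂ L] [FiniteDimensional ℂ L]
    (b : L →ₗ[ℂ] L →ₗ[ℂ] L) (hb : IsLeibniz b) (hsolv : IsSolvableAlg b)
    (N : Submodule ℂ L) (hN : IsNilradical b N)
    (bN : N →ₗ[ℂ] N →ₗ[ℂ] N) (hbN : ∀ u v : N, (bN u v : L) = b u v)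
    (m : ℕ)
    (hbound : ∀ (k : ℕ) (d : Fin k → Module.End ℂ N),
      (∀ i, IsDerivation bN (d i)) →
      (∀ α : Fin k → ℂ, α ≠ 0 → ¬ IsNilpotent (∑ i, α i • d i)) →
      k ≤ m) :
    Module.finrank ℂ L ≤ Module.finrank ℂ N + m := by
  have hLN : ∀ u v, b u v ∈ N := fun u v =>
    derSeries_one_le_of_isNilradical hb hsolv hN (mem_bracketSpan b trivial trivial)
  let B := Module.finBasis ℂ (L ⧸ N)
  choose y hy using fun i => N.mkQ_surjective (B i)
  have hq := hbound _ (fun i => rightMulOn b hN.1.1 (y i))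
    (fun i => hb.isDerivation_rightMulOn hN.1.1 hbN (y i)) fun α hα hnil => hα ?_
  · have := Submodule.finrank_quotient_add_finrank N
    omega
  simp_rw [← map_smul, ← map_sum] at hnil
  have h0 : N.mkQ (∑ i, α i • y i) = 0 :=
    (Submodule.Quotient.mk_eq_zero N).mpr (mem_of_isNilpotent_rightMulOn hb hN hLN hnil)
  rw [map_sum] at h0
  simp only [map_smul, hy] at h0
  exact funext (Fintype.linearIndependent_iff.mp B.linearIndependent α h0)
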